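/- For all integers m, n ≥ 1 with m + n ≥ 3, the spider Sp(1^[m], 2^[n]) admits a local antimagic total labeling with at most 3 distinct vertex weights; hence χ_lat(Sp(1^[m], 2^[n])) ≤ 3. -/
import Mathlib


open Finset

variable {V : Type*} [Fintype V] [DecidableEq V]

/-- The weight of a vertex `u` under the total labeling given by vertex labels `fv`
and edge labels `fe` : `w(u) = f(u) + \sum_{e incident to u} f(e)`. -/
def latWeight (G : SimpleGraph V) [DecidableRel G.Adj]
    (fv : V → ℕ) (fe : Sym2 V → ℕ) (u : V) : ℕ :=
  fv u + ∑ v ∈ G.neighborFinset u, fe s(u, v)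

/-- `fv, fe` together form a bijection from `V(G) ∪ E(G)` onto `{1, …, p + q}`,
where `p` is the order and `q` is the size of `G`. -/
def IsTotalLabeling (G : SimpleGraph V) [DecidableRel G.Adj]
    (fv : V → ℕ) (fe : Sym2 V → ℕ) : Prop :=
  Set.BijOn (Sum.elim fv (fun e : G.edgeSet => fe (e : Sym2 V))) Set.univ
    (Set.Icc 1 (Fintype.card V + G.edgeFinset.card))

/-- A local antimagic total labeling of `G` : a bijective total labeling such that any two
adjacent vertices get distinct weights. -/
def IsLocalAntimagicTotal (G : SimpleGraph V) [DecidableRel G.Adj]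
    (fv : V → ℕ) (fe : Sym2 V → ℕ) : Prop :=
  IsTotalLabeling G fv fe ∧
    ∀ ⦃u v : V⦄, G.Adj u v → latWeight G fv fe u ≠ latWeight G fv fe v

/-- The local antimagic total chromatic number `χ_lat(G)` : the minimum number of distinct
vertex weights taken over all local antimagic total labelings of `G`. -/
noncomputable def chiLat (G : SimpleGraph V) [DecidableRel G.Adj] : ℕ :=
  sInf {c | ∃ fv fe, IsLocalAntimagicTotal G fv fe ∧
    (Finset.univ.image (latWeight G fv fe)).card = c}

instance {W : Type*} (r : W → W → Prop) [DecidableEq W] [DecidableRel r] :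
    DecidableRel (SimpleGraph.fromRel r).Adj :=
  fun a b => decidable_of_iff _ (SimpleGraph.fromRel_adj r a b).symm

/-- Adjacency for the spider `Sp(1^[m], 2^[n])` : the center `x = none` is adjacent to each
leaf `y i = some (Sum.inl i)` and to each `u j = some (Sum.inr (j, false))`, and each `u j`
is adjacent to the leaf `v j = some (Sum.inr (j, true))`. -/
def spider12R (m n : ℕ) :
    Option (Fin m ⊕ Fin n × Bool) → Option (Fin m ⊕ Fin n × Bool) → Bool
  | none, some (Sum.inl _) => true
  | none, some (Sum.inr (_, false)) => true
  | some (Sum.inr (j, false)), some (Sum.inr (j', true)) => decide (j = j')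
  | _, _ => false

/-- The spider `Sp(1^[m], 2^[n])` with `m` legs of length `1` and `n` legs of length `2`. -/
abbrev spider12 (m n : ℕ) : SimpleGraph (Option (Fin m ⊕ Fin n × Bool)) :=
  SimpleGraph.fromRel (fun a b => spider12R m n a b = true)

namespace SpiderAux
variable (m n : ℕ)

def fv : Option (Fin m ⊕ Fin n × Bool) → ℕ
  | none => 2*m+4*n+1
  | some (Sum.inl i) => i.1 + 1
  | some (Sum.inr (j, false)) => m + j.1 + 1
  | some (Sum.inr (j, true)) => m + n + 2*j.1 + 2

def g : Option (Fin m ⊕ Fin n × Bool) → Option (Fin m ⊕ Fin n × Bool) → ℕ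
  | none, some (Sum.inl i) => 2*m + 4*n - i.1
  | none, some (Sum.inr (j, false)) => m + 3*n + 1 + j.1
  | some (Sum.inr (j, false)), some (Sum.inr (j', true)) =>
      if j.1 = j'.1 then m + 3*n - (2*j.1 + 1) else 0
  | _, _ => 0

def fe (e : Sym2 (Option (Fin m ⊕ Fin n × Bool))) : ℕ :=
  Sym2.lift ⟨fun a b => g m n a b + g m n b a, fun a b => by dsimp; omega⟩ e

@[simp] lemma fe_mk (a b) : fe m n s(a, b) = g m n a b + g m n b a := rfl

lemma fv_inj : Function.Injective (fv m n) := by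
  rintro (_ | (i | ⟨j, (_|_)⟩)) (_ | (i' | ⟨j', (_|_)⟩)) h <;>
    simp only [fv] at h <;>
    first
      | rfl
      | (exfalso; omega)
      | (simp only [Option.some.injEq, Sum.inl.injEq, Sum.inr.injEq, Prod.mk.injEq,
          Fin.ext_iff, and_true]; omega)

lemma edge_shape {e : Sym2 (Option (Fin m ⊕ Fin n × Bool))}
    (he : e ∈ (spider12 m n).edgeSet) :
    (∃ i : Fin m, e = s(none, some (Sum.inl i))) ∨
      (∃ j : Fin n, e = s(none, some (Sum.inr (j, false)))) ∨
      (∃ j : Fin n, e = s(some (Sum.inr (j, false)), some (Sum.inr (j, true)))) := by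
  induction e using Sym2.ind with
  | _ a b =>
    rw [SimpleGraph.mem_edgeSet] at he
    rcases a with _ | (i | ⟨j, (_|_)⟩) <;> rcases b with _ | (i' | ⟨j', (_|_)⟩) <;>
      simp only [SimpleGraph.fromRel_adj, spider12R, decide_eq_true_eq, ne_eq,
        Option.some.injEq, reduceCtorEq, not_false_eq_true, true_and, false_or, or_false,
        or_self, and_false, false_and, and_true] at he
    · exact Or.inl ⟨i', rfl⟩
    · exact Or.inr (Or.inl ⟨j', rfl⟩)
    · exact Or.inl ⟨i, Sym2.eq_swap⟩
    · exact Or.inr (Or.inl ⟨j, Sym2.eq_swap⟩)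
    · obtain ⟨-, h⟩ := he; subst h; exact Or.inr (Or.inr ⟨j, rfl⟩)
    · obtain ⟨-, h⟩ := he; subst h; exact Or.inr (Or.inr ⟨j', Sym2.eq_swap⟩)

lemma nbhd_none : (spider12 m n).neighborFinset none =
    (univ.image fun i : Fin m => some (Sum.inl i)) ∪
      (univ.image fun j : Fin n => some (Sum.inr (j, false))) := by
  ext b
  rcases b with _ | (i' | ⟨j', b'⟩)
  · simp [SimpleGraph.fromRel_adj, spider12R]
  · simp [SimpleGraph.fromRel_adj, spider12R]
  · rcases b' with _ | _ <;> simp [SimpleGraph.fromRel_adj, spider12R]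

lemma nbhd_y (i : Fin m) : (spider12 m n).neighborFinset (some (Sum.inl i)) = {none} := by
  ext b
  rcases b with _ | (i' | ⟨j', b'⟩)
  · simp [SimpleGraph.fromRel_adj, spider12R]
  · simp [SimpleGraph.fromRel_adj, spider12R]
  · rcases b' with _ | _ <;> simp [SimpleGraph.fromRel_adj, spider12R]

lemma nbhd_u (j : Fin n) : (spider12 m n).neighborFinset (some (Sum.inr (j, false))) =
    {none, some (Sum.inr (j, true))} := by
  ext b
  rcases b with _ | (i' | ⟨j', b'⟩)
  · simp [SimpleGraph.fromRel_adj, spider12R]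
  · simp [SimpleGraph.fromRel_adj, spider12R]
  · rcases b' with _ | _ <;> simp [SimpleGraph.fromRel_adj, spider12R, eq_comm, Fin.ext_iff]

lemma nbhd_v (j : Fin n) : (spider12 m n).neighborFinset (some (Sum.inr (j, true))) =
    {some (Sum.inr (j, false))} := by
  ext b
  rcases b with _ | (i' | ⟨j', b'⟩)
  · simp [SimpleGraph.fromRel_adj, spider12R]
  · simp [SimpleGraph.fromRel_adj, spider12R]
  · rcases b' with _ | _ <;> simp [SimpleGraph.fromRel_adj, spider12R, eq_comm, Fin.ext_iff]

lemma deg_none : (spider12 m n).degree none = m + n := by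
  rw [SimpleGraph.degree, nbhd_none, card_union_of_disjoint, card_image_of_injective,
    card_image_of_injective] <;>
    simp [Function.Injective, Finset.disjoint_left]

lemma card_edges : (spider12 m n).edgeFinset.card = m + 2*n := by
  have h := SimpleGraph.sum_degrees_eq_twice_card_edges (spider12 m n)
  rw [Fintype.sum_option, Fintype.sum_sum_type, Fintype.sum_prod_type, deg_none] at h
  simp only [Fintype.sum_bool] at h
  simp only [SimpleGraph.degree, nbhd_y, nbhd_u, nbhd_v] at h
  simp only [Finset.card_singleton] at h
  have hc : ∀ j : Fin n, ({none, some (Sum.inr (j, true))} :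
      Finset (Option (Fin m ⊕ Fin n × Bool))).card = 2 := by
    intro j; rw [card_insert_of_notMem (by simp), card_singleton]
  simp only [hc, Finset.sum_const, Finset.sum_add_distrib, card_univ, Fintype.card_fin,
    smul_eq_mul] at h
  omega

end SpiderAux
namespace SpiderAux
section
variable (m n : ℕ)



lemma w_y (i : Fin m) :
    latWeight (spider12 m n) (fv m n) (fe m n) (some (Sum.inl i)) = 2*m + 4*n + 1 := by
  rw [latWeight, nbhd_y, sum_singleton, fe_mk]
  simp only [fv, g]
  omega

lemma w_v (j : Fin n) :
    latWeight (spider12 m n) (fv m n) (fe m n) (some (Sum.inr (j, true))) = 2*m + 4*n + 1 := by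
  rw [latWeight, nbhd_v, sum_singleton, fe_mk]
  simp only [fv, g, if_pos rfl, if_true]
  omega

lemma w_u (j : Fin n) :
    latWeight (spider12 m n) (fv m n) (fe m n) (some (Sum.inr (j, false))) = 3*m + 6*n + 1 := by
  rw [latWeight, nbhd_u, sum_insert (by simp), sum_singleton, fe_mk, fe_mk]
  simp only [fv, g, if_pos rfl, if_true]
  omega

lemma w_x_ge (hn : 1 ≤ n) :
    3*m + 7*n + 2 ≤ latWeight (spider12 m n) (fv m n) (fe m n) none := by
  rw [latWeight]
  have hmem : (some (Sum.inr ((⟨0, hn⟩ : Fin n), false))) ∈ (spider12 m n).neighborFinset none := by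
    simp [SimpleGraph.fromRel_adj, spider12R]
  have hle := Finset.single_le_sum (f := fun b => fe m n s(none, b))
      (fun b _ => Nat.zero_le _) hmem
  have hfe : fe m n s(none, some (Sum.inr ((⟨0, hn⟩ : Fin n), false))) = m + 3*n + 1 := by
    simp [fe_mk, g]
  rw [hfe] at hle
  simp only [fv]
  omega

lemma F_inj : Function.Injective (Sum.elim (fv m n)
    (fun e : (spider12 m n).edgeSet => fe m n (e : Sym2 _))) := by
  rintro (a | ⟨e, he⟩) (b | ⟨e', he'⟩) h
  · exact congrArg Sum.inl (fv_inj m n h)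
  · exfalso
    rcases edge_shape m n he' with ⟨i', rfl⟩ | ⟨j', rfl⟩ | ⟨j', rfl⟩ <;>
      rcases a with _ | (i | ⟨j, (_|_)⟩) <;>
      simp only [Sum.elim_inl, Sum.elim_inr, fv, fe_mk, g, if_pos rfl, if_true] at h <;> omega
  · exfalso
    rcases edge_shape m n he with ⟨i, rfl⟩ | ⟨j, rfl⟩ | ⟨j, rfl⟩ <;>
      rcases b with _ | (i' | ⟨j', (_|_)⟩) <;>
      simp only [Sum.elim_inl, Sum.elim_inr, fv, fe_mk, g, if_pos rfl, if_true] at h <;> omega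
  · rcases edge_shape m n he with ⟨i, rfl⟩ | ⟨j, rfl⟩ | ⟨j, rfl⟩ <;>
      rcases edge_shape m n he' with ⟨i', rfl⟩ | ⟨j', rfl⟩ | ⟨j', rfl⟩ <;>
      simp only [Sum.elim_inr, fe_mk, g, if_pos rfl, if_true] at h
    · have : i = i' := by apply Fin.ext; omega
      subst this; rfl
    · exfalso; omega
    · exfalso; omega
    · exfalso; omega
    · have : j = j' := by apply Fin.ext; omega
      subst this; rfl
    · exfalso; omega
    · exfalso; omega
    · exfalso; omega
    · have : j = j' := by apply Fin.ext; omega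
      subst this; rfl

lemma F_mapsTo (z : Option (Fin m ⊕ Fin n × Bool) ⊕ (spider12 m n).edgeSet) :
    Sum.elim (fv m n) (fun e : (spider12 m n).edgeSet => fe m n (e : Sym2 _)) z ∈
      Set.Icc 1 (2*m + 4*n + 1) := by
  rcases z with a | ⟨e, he⟩
  · rcases a with _ | (i | ⟨j, (_|_)⟩) <;>
      simp only [Sum.elim_inl, fv, Set.mem_Icc] <;> omega
  · rcases edge_shape m n he with ⟨i, rfl⟩ | ⟨j, rfl⟩ | ⟨j, rfl⟩ <;>
      simp only [Sum.elim_inr, fe_mk, g, if_pos rfl, if_true, Set.mem_Icc] <;> omega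

end
end SpiderAux

/-- For all `m, n ≥ 1` with `m + n ≥ 3`, the spider `Sp(1^[m], 2^[n])` admits a local
antimagic total labeling with at most `3` distinct vertex weights; hence
`χ_lat(Sp(1^[m], 2^[n])) ≤ 3`. -/
theorem chiLat_spider12_le_three (m n : ℕ) (hm : 1 ≤ m) (hn : 1 ≤ n) (hmn : 3 ≤ m + n) :
    (∃ fv fe, IsLocalAntimagicTotal (spider12 m n) fv fe ∧
      (Finset.univ.image (latWeight (spider12 m n) fv fe)).card ≤ 3) ∧
    chiLat (spider12 m n) ≤ 3 := by
  classical
  have hcardV : Fintype.card (Option (Fin m ⊕ Fin n × Bool)) = m + 2*n + 1 := by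
    simp only [Fintype.card_option, Fintype.card_sum, Fintype.card_prod, Fintype.card_fin,
      Fintype.card_bool]
    omega
  have hN : Fintype.card (Option (Fin m ⊕ Fin n × Bool)) + (spider12 m n).edgeFinset.card
      = 2*m + 4*n + 1 := by
    rw [hcardV, SpiderAux.card_edges]; omega
  have hkey : Set.BijOn (Sum.elim (SpiderAux.fv m n)
      (fun e : (spider12 m n).edgeSet => SpiderAux.fe m n (e : Sym2 _))) Set.univ
      (Set.Icc 1 (2*m + 4*n + 1)) := by
    have himg : (Sum.elim (SpiderAux.fv m n)
        (fun e : (spider12 m n).edgeSet => SpiderAux.fe m n (e : Sym2 _))) '' Set.univ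
        = Set.Icc 1 (2*m + 4*n + 1) := by
      apply Set.eq_of_subset_of_ncard_le
      · rintro w ⟨z, -, rfl⟩
        exact SpiderAux.F_mapsTo m n z
      · rw [Set.ncard_image_of_injective _ (SpiderAux.F_inj m n), Set.ncard_univ,
          Nat.card_eq_fintype_card, Set.ncard_eq_toFinset_card', Set.toFinset_Icc,
          Nat.card_Icc, Fintype.card_sum, hcardV]
        rw [← SimpleGraph.edgeFinset_card, SpiderAux.card_edges]
        omega
      · exact Set.toFinite _
    exact himg ▸ (SpiderAux.F_inj m n).injOn.bijOn_image
  have htot : IsTotalLabeling (spider12 m n) (SpiderAux.fv m n) (SpiderAux.fe m n) := by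
    rw [IsTotalLabeling, hN]
    exact hkey
  have hx := SpiderAux.w_x_ge m n hn
  have hlat : IsLocalAntimagicTotal (spider12 m n) (SpiderAux.fv m n) (SpiderAux.fe m n) := by
    refine ⟨htot, ?_⟩
    intro u v hadj
    rcases u with _ | (i | ⟨j, (_|_)⟩) <;> rcases v with _ | (i' | ⟨j', (_|_)⟩) <;>
      first
        | (simp only [SpiderAux.w_y, SpiderAux.w_u, SpiderAux.w_v]; omega)
        | simp [SimpleGraph.fromRel_adj, spider12R] at hadj
  have hsub : Finset.univ.image (latWeight (spider12 m n) (SpiderAux.fv m n) (SpiderAux.fe m n))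
      ⊆ {2*m+4*n+1, 3*m+6*n+1,
          latWeight (spider12 m n) (SpiderAux.fv m n) (SpiderAux.fe m n) none} := by
    intro w hw
    simp only [Finset.mem_image] at hw
    obtain ⟨a, -, rfl⟩ := hw
    rcases a with _ | (i | ⟨j, (_|_)⟩)
    · simp
    · rw [SpiderAux.w_y]; simp
    · rw [SpiderAux.w_u]; simp
    · rw [SpiderAux.w_v]; simp
  have hcard3 : (Finset.univ.image
      (latWeight (spider12 m n) (SpiderAux.fv m n) (SpiderAux.fe m n))).card ≤ 3 := by
    refine le_trans (Finset.card_le_card hsub) ?_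
    refine le_trans (Finset.card_insert_le _ _) ?_
    refine Nat.succ_le_succ ?_
    refine le_trans (Finset.card_insert_le _ _) ?_
    simp
  refine ⟨⟨SpiderAux.fv m n, SpiderAux.fe m n, hlat, hcard3⟩, ?_⟩
  have hmem : (Finset.univ.image
      (latWeight (spider12 m n) (SpiderAux.fv m n) (SpiderAux.fe m n))).card ∈
      {c | ∃ fv fe, IsLocalAntimagicTotal (spider12 m n) fv fe ∧
        (Finset.univ.image (latWeight (spider12 m n) fv fe)).card = c} :=
    ⟨SpiderAux.fv m n, SpiderAux.fe m n, hlat, rfl⟩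
  exact le_trans (Nat.sInf_le hmem) hcard3
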